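/- arXiv:1704.06932 — 11 statements merged into one kernel-verified Lean document; each statement's English description precedes it below -/
import Mathlib

section
/- Let X be a real vector space with Hamel basis {e_i}_{i∈I}, and let A ⊆ X be a nonempty convex set. A point a ∈ A belongs to the algebraic interior cor(A) if and only if for every i ∈ I there exists a scalar δ_i > 0 such that a + δ_i e_i ∈ A and a − δ_i e_i ∈ A. -/
open Pointwise

/-- Algebraic interior (core) of a set `A` in a real vector space:
`cor A = {x ∈ A | ∀ d, ∃ δ > 0, ∀ λ ∈ [0, δ], x + λ • d ∈ A}`. -/
def cor {X : Type*} [AddCommGroup X] [Module ℝ X] (A : Set X) : Set X :=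
  {x | x ∈ A ∧ ∀ d : X, ∃ δ : ℝ, 0 < δ ∧ ∀ lam ∈ Set.Icc (0 : ℝ) δ, x + lam • d ∈ A}

/-- Relative algebraic interior of `A`: directions are taken in `L(A) = span (A - A)`. -/
def icr {X : Type*} [AddCommGroup X] [Module ℝ X] (A : Set X) : Set X :=
  {x | x ∈ A ∧ ∀ d ∈ Submodule.span ℝ (A - A),
    ∃ δ : ℝ, 0 < δ ∧ ∀ lam ∈ Set.Icc (0 : ℝ) δ, x + lam • d ∈ A}

/-- Vectorial closure of `A`:
`vcl A = {b | ∃ d, ∀ δ > 0, ∃ λ ∈ [0, δ], b + λ • d ∈ A}`. -/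
def vcl {X : Type*} [AddCommGroup X] [Module ℝ X] (A : Set X) : Set X :=
  {b | ∃ d : X, ∀ δ : ℝ, 0 < δ → ∃ lam ∈ Set.Icc (0 : ℝ) δ, b + lam • d ∈ A}

/-- The core convex topology `τ_c`: the topology whose open sets are the unions of
members of `𝔅 = {A | A convex and cor A = A}`; since `𝔅` is a topological basis
(closed under binary intersection, contains `X` and `∅`), this is the topology
generated by `𝔅`. -/
def tauc (X : Type*) [AddCommGroup X] [Module ℝ X] : TopologicalSpace X :=
  TopologicalSpace.generateFrom {A : Set X | Convex ℝ A ∧ cor A = A}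

/-!
The directions `d` in which a convex set `A` contains some segment `[a, a + δ d]`, `δ > 0`,
form a pointed cone `C`. The point `a` is in `cor A` exactly when `C` is the whole space.
The hypothesis says that `C ⊓ -C`, the lineality space of `C`, contains every basis vector;
being a linear subspace, it then contains their span, which is everything.
-/

theorem PointedCone.eq_top_of_subset_lineal {R E : Type*} [Ring R] [LinearOrder R]
    [IsOrderedRing R] [AddCommGroup E] [Module R E] {C : PointedCone R E} {s : Set E}
    (hs : Submodule.span R s = ⊤) (hsC : s ⊆ C.lineal) : C = ⊤ :=
  top_le_iff.mp fun _ _ => C.lineal_le <| Submodule.span_le.mpr hsC (hs ▸ Submodule.mem_top)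

namespace Convex

variable {X : Type*} [AddCommGroup X] [Module ℝ X] {A : Set X} {a : X}

theorem add_smul_mem_of_le (hA : Convex ℝ A) (ha : a ∈ A) {d : X} {δ t : ℝ}
    (hδ : a + δ • d ∈ A) (ht₀ : 0 ≤ t) (htδ : t ≤ δ) : a + t • d ∈ A := by
  rcases ht₀.eq_or_lt with rfl | ht
  · simpa using ha
  have hδ₀ : 0 < δ := ht.trans_le htδ
  have := hA.add_smul_mem ha hδ ⟨div_nonneg ht₀ hδ₀.le, (div_le_one hδ₀).mpr htδ⟩
  rwa [smul_smul, div_mul_cancel₀ _ hδ₀.ne'] at this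

def radialCone (hA : Convex ℝ A) (ha : a ∈ A) : PointedCone ℝ X where
  carrier := {d | ∃ δ : ℝ, 0 < δ ∧ a + δ • d ∈ A}
  zero_mem' := ⟨1, one_pos, by simpa using ha⟩
  add_mem' := by
    rintro d₁ d₂ ⟨δ₁, hδ₁, h₁⟩ ⟨δ₂, hδ₂, h₂⟩
    set δ := min δ₁ δ₂
    have hδ : 0 < δ := lt_min hδ₁ hδ₂
    have m₁ := hA.add_smul_mem_of_le ha h₁ hδ.le (min_le_left δ₁ δ₂)
    have m₂ := hA.add_smul_mem_of_le ha h₂ hδ.le (min_le_right δ₁ δ₂)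
    refine ⟨δ / 2, half_pos hδ, ?_⟩
    convert hA m₁ m₂ (by norm_num : (0 : ℝ) ≤ 1 / 2) (by norm_num : (0 : ℝ) ≤ 1 / 2)
      (by norm_num) using 1
    module
  smul_mem' := by
    rintro ⟨c, hc⟩ d ⟨δ, hδ, h⟩
    rw [Nonneg.mk_smul]
    rcases hc.eq_or_lt with rfl | hc
    · exact ⟨1, one_pos, by simpa using ha⟩
    · refine ⟨δ / c, div_pos hδ hc, ?_⟩
      rwa [smul_smul, div_mul_cancel₀ _ hc.ne']

theorem mem_cor_iff_radialCone_eq_top (hA : Convex ℝ A) (ha : a ∈ A) :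
    a ∈ cor A ↔ radialCone hA ha = ⊤ := by
  rw [Submodule.eq_top_iff']
  refine ⟨fun ⟨_, hcor⟩ d => ?_, fun h => ⟨ha, fun d => ?_⟩⟩
  · obtain ⟨δ, hδ, hseg⟩ := hcor d
    exact ⟨δ, hδ, hseg δ ⟨hδ.le, le_rfl⟩⟩
  · obtain ⟨δ, hδ, hd⟩ := h d
    exact ⟨δ, hδ, fun t ht => hA.add_smul_mem_of_le ha hd ht.1 ht.2⟩

theorem mem_cor_iff_of_span_eq_top (hA : Convex ℝ A) (ha : a ∈ A) {s : Set X}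
    (hs : Submodule.span ℝ s = ⊤) :
    a ∈ cor A ↔ ∀ v ∈ s, ∃ δ : ℝ, 0 < δ ∧ a + δ • v ∈ A ∧ a - δ • v ∈ A := by
  simp only [sub_eq_add_neg, ← smul_neg]
  rw [mem_cor_iff_radialCone_eq_top hA ha]
  refine ⟨fun h v _ => ?_, fun h => PointedCone.eq_top_of_subset_lineal hs fun v hv => ?_⟩
  · obtain ⟨δ₁, hδ₁, h₁⟩ : v ∈ radialCone hA ha := h ▸ Submodule.mem_top
    obtain ⟨δ₂, hδ₂, h₂⟩ : -v ∈ radialCone hA ha := h ▸ Submodule.mem_top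
    have hδ : 0 < min δ₁ δ₂ := lt_min hδ₁ hδ₂
    exact ⟨min δ₁ δ₂, hδ, hA.add_smul_mem_of_le ha h₁ hδ.le (min_le_left _ _),
      hA.add_smul_mem_of_le ha h₂ hδ.le (min_le_right _ _)⟩
  · obtain ⟨δ, hδ, hpos, hneg⟩ := h v hv
    exact PointedCone.mem_lineal.mpr ⟨⟨δ, hδ, hpos⟩, ⟨δ, hδ, hneg⟩⟩

end Convex

theorem stmt0_general {X : Type*} [AddCommGroup X] [Module ℝ X] {ι : Type*} (e : Module.Basis ι ℝ X)
    {A : Set X} (hconv : Convex ℝ A) {a : X} (ha : a ∈ A) :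
    a ∈ cor A ↔ ∀ i : ι, ∃ δ : ℝ, 0 < δ ∧ a + δ • e i ∈ A ∧ a - δ • e i ∈ A :=
  (hconv.mem_cor_iff_of_span_eq_top ha e.span_eq).trans Set.forall_mem_range

/-- For a nonempty convex set `A` in a real vector space `X` with Hamel basis
`{e i}`, a point `a ∈ A` lies in `cor A` iff for every index `i` there is `δᵢ > 0` with
`a + δᵢ • e i ∈ A` and `a - δᵢ • e i ∈ A`. -/
theorem stmt0 {X : Type*} [AddCommGroup X] [Module ℝ X] {ι : Type*} (e : Module.Basis ι ℝ X)
    {A : Set X} (hne : A.Nonempty) (hconv : Convex ℝ A) {a : X} (ha : a ∈ A) :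
    a ∈ cor A ↔ ∀ i : ι, ∃ δ : ℝ, 0 < δ ∧ a + δ • e i ∈ A ∧ a - δ • e i ∈ A :=
  stmt0_general e hconv ha
end

section
/- Let K and C be convex, relatively solid subsets of a real vector space X (i.e., icr(K) ≠ ∅ and icr(C) ≠ ∅). Then icr(K) + icr(C) = icr(K + C). -/
open Pointwise

/-!
The inclusion `icr K + icr C ⊆ icr (K + C)` holds because `L(K + C) = L(K) + L(C)`, so a
direction of `K + C` splits into directions of `K` and of `C`. Conversely, fix
`z = k₀ + c₀` with `k₀ ∈ icr K`, `c₀ ∈ icr C`. A point `x ∈ icr (K + C)` can be pushed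
slightly beyond itself away from `z`, to some `k₁ + c₁ ∈ K + C`; then `x` is a proper convex
combination of `z` and `k₁ + c₁`, and by convexity the corresponding combinations of
`k₀, k₁` and of `c₀, c₁` lie in `icr K` and `icr C`.
-/

section

variable {X : Type*} [AddCommGroup X] [Module ℝ X]

theorem Convex.combo_icr_self_mem_icr {A : Set X} (hA : Convex ℝ A) {a b : X}
    (ha : a ∈ icr A) (hb : b ∈ A) {s t : ℝ} (hs : 0 < s) (ht : 0 ≤ t) (hst : s + t = 1) :
    s • a + t • b ∈ icr A := by
  refine ⟨hA ha.1 hb hs.le ht hst, fun d hd => ?_⟩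
  obtain ⟨δ, hδ, hmem⟩ := ha.2 d hd
  refine ⟨s * δ, by positivity, ?_⟩
  rintro lam ⟨hlam0, hlam⟩
  have hshift : a + (lam / s) • d ∈ A :=
    hmem _ ⟨by positivity, by rw [div_le_iff₀ hs]; linarith⟩
  have heq : s • (a + (lam / s) • d) + t • b = s • a + t • b + lam • d := by
    rw [smul_add, smul_smul, mul_div_cancel₀ _ hs.ne']
    abel
  simpa only [heq] using hA hshift hb hs.le ht hst

theorem exists_combo_eq_of_mem_icr {A : Set X} {x z : X} (hx : x ∈ icr A) (hz : z ∈ A) :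
    ∃ y ∈ A, ∃ s t : ℝ, 0 < s ∧ 0 ≤ t ∧ s + t = 1 ∧ s • z + t • y = x := by
  obtain ⟨δ, hδ, hmem⟩ :=
    hx.2 (x - z) (Submodule.subset_span (Set.sub_mem_sub hx.1 hz))
  -- `y = x + δ • (x - z)` gives `(1 + δ) • x = δ • z + y`.
  refine ⟨x + δ • (x - z), hmem δ ⟨hδ.le, le_rfl⟩, δ / (1 + δ), 1 / (1 + δ),
    by positivity, by positivity, by field_simp; ring, ?_⟩
  match_scalars <;> field_simp
  ring

theorem span_add_sub_add {K C : Set X} (hK : K.Nonempty) (hC : C.Nonempty) :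
    Submodule.span ℝ ((K + C) - (K + C)) =
      Submodule.span ℝ (K - K) ⊔ Submodule.span ℝ (C - C) := by
  obtain ⟨k₀, hk₀⟩ := hK
  obtain ⟨c₀, hc₀⟩ := hC
  apply le_antisymm
  · rw [Submodule.span_le]
    rintro _ ⟨_, ⟨k₁, hk₁, c₁, hc₁, rfl⟩, _, ⟨k₂, hk₂, c₂, hc₂, rfl⟩, rfl⟩
    dsimp only
    rw [add_sub_add_comm]
    exact Submodule.add_mem_sup (Submodule.subset_span (Set.sub_mem_sub hk₁ hk₂))
      (Submodule.subset_span (Set.sub_mem_sub hc₁ hc₂))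
  · refine sup_le (Submodule.span_mono ?_) (Submodule.span_mono ?_)
    · rintro _ ⟨a, ha, b, hb, rfl⟩
      dsimp only
      rw [← add_sub_add_right_eq_sub a b c₀]
      exact Set.sub_mem_sub (Set.add_mem_add ha hc₀) (Set.add_mem_add hb hc₀)
    · rintro _ ⟨a, ha, b, hb, rfl⟩
      dsimp only
      rw [← add_sub_add_left_eq_sub a b k₀]
      exact Set.sub_mem_sub (Set.add_mem_add hk₀ ha) (Set.add_mem_add hk₀ hb)

theorem icr_add_subset (K C : Set X) : icr K + icr C ⊆ icr (K + C) := by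
  rintro _ ⟨k, hk, c, hc, rfl⟩
  refine ⟨Set.add_mem_add hk.1 hc.1, fun d hd => ?_⟩
  rw [span_add_sub_add ⟨k, hk.1⟩ ⟨c, hc.1⟩] at hd
  obtain ⟨d₁, hd₁, d₂, hd₂, rfl⟩ := Submodule.mem_sup.mp hd
  obtain ⟨δ₁, hδ₁, hK⟩ := hk.2 d₁ hd₁
  obtain ⟨δ₂, hδ₂, hC⟩ := hc.2 d₂ hd₂
  refine ⟨min δ₁ δ₂, lt_min hδ₁ hδ₂, fun lam ⟨hlam0, hlam⟩ => ?_⟩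
  rw [smul_add, add_add_add_comm]
  exact Set.add_mem_add (hK lam ⟨hlam0, hlam.trans (min_le_left _ _)⟩)
    (hC lam ⟨hlam0, hlam.trans (min_le_right _ _)⟩)

theorem icr_add_subset_add_icr {K C : Set X} (hK : Convex ℝ K) (hC : Convex ℝ C)
    {k₀ c₀ : X} (hk₀ : k₀ ∈ icr K) (hc₀ : c₀ ∈ icr C) :
    icr (K + C) ⊆ icr K + icr C := by
  intro x hx
  obtain ⟨_, ⟨k₁, hk₁, c₁, hc₁, rfl⟩, s, t, hs, ht, hst, rfl⟩ :=
    exists_combo_eq_of_mem_icr hx (Set.add_mem_add hk₀.1 hc₀.1)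
  refine ⟨_, hK.combo_icr_self_mem_icr hk₀ hk₁ hs ht hst,
    _, hC.combo_icr_self_mem_icr hc₀ hc₁ hs ht hst, ?_⟩
  simp only [smul_add]
  abel

end

/-- For convex, relatively solid sets `K, C` in a real vector space,
`icr K + icr C = icr (K + C)`. -/
theorem stmt1 {X : Type*} [AddCommGroup X] [Module ℝ X] {K C : Set X}
    (hK : Convex ℝ K) (hC : Convex ℝ C)
    (hKs : (icr K).Nonempty) (hCs : (icr C).Nonempty) :
    icr K + icr C = icr (K + C) :=
  (icr_add_subset K C).antisymm (icr_add_subset_add_icr hK hC hKs.some_mem hCs.some_mem)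
end

section
/- Let X be a real vector space equipped with the core convex topology τ_c. Then every convex function f : X → ℝ is τ_c-continuous. -/
open Pointwise

open Set

/-- Along any line through a point of a strict sublevel set of a convex function,
one stays in the sublevel set for small parameters. -/
lemma line_lemma {X : Type*} [AddCommGroup X] [Module ℝ X] {f : X → ℝ}
    (hf : ConvexOn ℝ Set.univ f) {x : X} {a : ℝ} (hx : f x < a) (d : X) :
    ∃ δ : ℝ, 0 < δ ∧ ∀ lam ∈ Set.Icc (0:ℝ) δ, f (x + lam • d) < a := by
  set c := f (x + d) with hc
  set A := |c - f x| with hA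
  have hA0 : 0 ≤ A := abs_nonneg _
  refine ⟨min 1 ((a - f x) / (2 * (A + 1))), lt_min one_pos (div_pos (by linarith) (by positivity)), ?_⟩
  rintro lam ⟨h0, h1⟩
  have hlam1 : lam ≤ 1 := h1.trans (min_le_left _ _)
  have hlam2 : lam ≤ (a - f x) / (2 * (A + 1)) := h1.trans (min_le_right _ _)
  have hmul : lam * (2 * (A + 1)) ≤ a - f x := (le_div_iff₀ (by positivity)).mp hlam2
  have he : x + lam • d = (1 - lam) • x + lam • (x + d) := by module
  have hb := hf.2 (mem_univ x) (mem_univ (x + d)) (by linarith : (0:ℝ) ≤ 1 - lam) h0 (by ring)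
  rw [← he] at hb
  simp only [smul_eq_mul] at hb
  have habs : c - f x ≤ A := le_abs_self _
  nlinarith [mul_le_mul_of_nonneg_left habs h0]

/-- Strict sublevel sets of convex functions belong to the basis `𝔅`. -/
lemma basis_mem {X : Type*} [AddCommGroup X] [Module ℝ X] {f : X → ℝ}
    (hf : ConvexOn ℝ Set.univ f) (a : ℝ) :
    (f ⁻¹' Iio a) ∈ {A : Set X | Convex ℝ A ∧ cor A = A} := by
  constructor
  · have h := hf.convex_lt a
    rw [Set.sep_univ] at h
    exact h
  · apply subset_antisymm (fun x hx => hx.1)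
    intro x hx
    exact ⟨hx, fun d => line_lemma hf hx d⟩

/-- Every convex function `f : X → ℝ` is continuous with respect to the
core convex topology `τ_c`. -/
theorem stmt2 {X : Type*} [AddCommGroup X] [Module ℝ X] (f : X → ℝ)
    (hf : ConvexOn ℝ Set.univ f) :
    @Continuous X ℝ (tauc X) inferInstance f := by
  letI : TopologicalSpace X := tauc X
  have key : ∀ (g : X → ℝ), ConvexOn ℝ Set.univ g → ∀ a : ℝ, IsOpen (g ⁻¹' Iio a) :=
    fun g hg a => TopologicalSpace.isOpen_generateFrom_of_mem (basis_mem hg a)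
  rw [show (inferInstance : TopologicalSpace ℝ) = _ from OrderTopology.topology_eq_generate_intervals,
    continuous_generateFrom_iff]
  rintro s ⟨a, rfl | rfl⟩
  · -- superlevel set {f > a}
    have hu : f ⁻¹' Ioi a = ⋃ x ∈ f ⁻¹' Ioi a,
        (fun y => f ((2:ℝ) • x - y)) ⁻¹' Iio (2 * f x - a) := by
      ext y
      simp only [mem_iUnion, mem_preimage, mem_Iio, mem_Ioi, exists_prop]
      constructor
      · intro hy
        refine ⟨y, hy, ?_⟩
        have : (2:ℝ) • y - y = y := by module
        rw [this]; linarith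
      · rintro ⟨x, hx, hxy⟩
        have hmid : f x ≤ (1/2) * f y + (1/2) * f ((2:ℝ) • x - y) := by
          have hb := hf.2 (mem_univ y) (mem_univ ((2:ℝ) • x - y))
            (by norm_num : (0:ℝ) ≤ 1/2) (by norm_num : (0:ℝ) ≤ 1/2) (by norm_num)
          have he : (1/2:ℝ) • y + (1/2:ℝ) • ((2:ℝ) • x - y) = x := by module
          rwa [he] at hb
        linarith
    rw [hu]
    apply isOpen_biUnion
    intro x hx
    have hg : ConvexOn ℝ Set.univ (fun y => f ((2:ℝ) • x - y)) := by
      refine ⟨convex_univ, fun y _ z _ p q hp hq hpq => ?_⟩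
      have he : (2:ℝ) • x - (p • y + q • z) = p • ((2:ℝ) • x - y) + q • ((2:ℝ) • x - z) := by
        match_scalars <;> linarith
      simp only []
      rw [he]
      exact hf.2 (mem_univ _) (mem_univ _) hp hq hpq
    exact key _ hg _
  · exact key f hf a
end

section
/- Let X be a real vector space. The collection 𝔅 = {A ⊆ X : A is convex and cor(A) = A} is a topological basis on X; in particular, X ∈ 𝔅, ∅ ∈ 𝔅, and the intersection of any two members of 𝔅 again belongs to 𝔅. -/
open Pointwise

/-- The collection `𝔅 = {A | A convex and cor A = A}` is a topological basis
on `X`: `X ∈ 𝔅`, `∅ ∈ 𝔅`, and the intersection of any two members of `𝔅` belongs to `𝔅`. -/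
theorem stmt3 (X : Type*) [AddCommGroup X] [Module ℝ X] :
    (Set.univ ∈ {A : Set X | Convex ℝ A ∧ cor A = A}) ∧
    ((∅ : Set X) ∈ {A : Set X | Convex ℝ A ∧ cor A = A}) ∧
    (∀ A B : Set X, A ∈ {A : Set X | Convex ℝ A ∧ cor A = A} →
      B ∈ {A : Set X | Convex ℝ A ∧ cor A = A} →
      A ∩ B ∈ {A : Set X | Convex ℝ A ∧ cor A = A}) := by
  refine ⟨⟨convex_univ, ?_⟩, ⟨convex_empty, ?_⟩, ?_⟩
  · ext x
    simp [cor]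
    exact ⟨1, one_pos⟩
  · ext x
    simp [cor]
  · rintro A B ⟨hAc, hA⟩ ⟨hBc, hB⟩
    refine ⟨hAc.inter hBc, ?_⟩
    apply Set.Subset.antisymm (fun x hx => hx.1)
    intro x hx
    refine ⟨hx, fun d => ?_⟩
    have hA' := (show x ∈ cor A from hA.symm ▸ hx.1).2
    have hB' := (show x ∈ cor B from hB.symm ▸ hx.2).2
    obtain ⟨δ₁, hδ₁, h₁⟩ := hA' d
    obtain ⟨δ₂, hδ₂, h₂⟩ := hB' d
    refine ⟨min δ₁ δ₂, lt_min hδ₁ hδ₂, fun lam hlam => ?_⟩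
    exact ⟨h₁ lam ⟨hlam.1, hlam.2.trans (min_le_left _ _)⟩,
      h₂ lam ⟨hlam.1, hlam.2.trans (min_le_right _ _)⟩⟩
end

section
/- Let X be a real vector space equipped with the core convex topology τ_c. Then (X, τ_c) is a Hausdorff locally convex topological vector space: addition X × X → X and scalar multiplication ℝ × X → X are τ_c-continuous, τ_c is Hausdorff, and every point has a neighborhood basis of convex sets. -/
/-! Convex core-open sets are stable under finite intersections and under preimages by affine
maps, so they form a basis of `τ_c` and every affine map is `τ_c`-continuous. Addition is
continuous at `(x, y)` because the two halves of a basic neighbourhood of `x + y`, recentred at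
`x` and `y`, add up into it. For scalar multiplication at `(t, x)` one finds, for a basic
neighbourhood `B` of `t • x`, a balanced basic `D` with `t • x + D ⊆ B`; since `0 ∈ cor D`,
`D` absorbs `x`, which controls the perturbation of `t`. Open convex sets of a locally convex
space are core-open, so `τ_c` is finer than every locally convex topology; hence linear
functionals are `τ_c`-continuous into `ℝ`, and they separate points. -/

open Pointwise

open Topology TopologicalSpace

section CoreConvexBasis

variable {X Y : Type*} [AddCommGroup X] [Module ℝ X] [AddCommGroup Y] [Module ℝ Y]

variable (X) in
def coreConvexBasis : Set (Set X) := {A | Convex ℝ A ∧ cor A = A}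

theorem cor_subset (A : Set X) : cor A ⊆ A := fun _ hx => hx.1

theorem univ_mem_coreConvexBasis : (Set.univ : Set X) ∈ coreConvexBasis X :=
  ⟨convex_univ, (cor_subset _).antisymm fun _ _ =>
    ⟨trivial, fun _ => ⟨1, one_pos, fun _ _ => trivial⟩⟩⟩

theorem inter_mem_coreConvexBasis {A B : Set X} (hA : A ∈ coreConvexBasis X)
    (hB : B ∈ coreConvexBasis X) : A ∩ B ∈ coreConvexBasis X := by
  refine ⟨hA.1.inter hB.1, (cor_subset _).antisymm fun x hx => ⟨hx, fun d => ?_⟩⟩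
  obtain ⟨δ₁, hδ₁, h₁⟩ := (hA.2.symm ▸ hx.1 : x ∈ cor A).2 d
  obtain ⟨δ₂, hδ₂, h₂⟩ := (hB.2.symm ▸ hx.2 : x ∈ cor B).2 d
  exact ⟨min δ₁ δ₂, lt_min hδ₁ hδ₂, fun lam hlam =>
    ⟨h₁ lam ⟨hlam.1, hlam.2.trans (min_le_left _ _)⟩,
      h₂ lam ⟨hlam.1, hlam.2.trans (min_le_right _ _)⟩⟩⟩

theorem preimage_cor_subset_cor_preimage (f : X →ᵃ[ℝ] Y) (B : Set Y) :
    f ⁻¹' cor B ⊆ cor (f ⁻¹' B) := by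
  intro x hx
  refine ⟨hx.1, fun d => ?_⟩
  obtain ⟨δ, hδ, h⟩ := hx.2 (f.linear d)
  refine ⟨δ, hδ, fun lam hlam => ?_⟩
  have hf : f (x + lam • d) = f x + lam • f.linear d := by
    rw [add_comm, ← vadd_eq_add, f.map_vadd, map_smul, vadd_eq_add, add_comm]
  simpa [Set.mem_preimage, hf] using h lam hlam

theorem preimage_mem_coreConvexBasis (f : X →ᵃ[ℝ] Y) {B : Set Y}
    (hB : B ∈ coreConvexBasis Y) : f ⁻¹' B ∈ coreConvexBasis X :=
  ⟨hB.1.affine_preimage f, (cor_subset _).antisymm <| by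
    simpa only [hB.2] using preimage_cor_subset_cor_preimage f B⟩

theorem setOf_add_smul_mem_coreConvexBasis {B : Set X} (hB : B ∈ coreConvexBasis X)
    (a : X) (c : ℝ) : {w | a + c • w ∈ B} ∈ coreConvexBasis X := by
  convert preimage_mem_coreConvexBasis (AffineMap.const ℝ X a + c • AffineMap.id ℝ X) hB
  ext; simp

theorem isTopologicalBasis_coreConvexBasis :
    letI := tauc X; IsTopologicalBasis (coreConvexBasis X) := by
  let := tauc X
  exact ⟨fun _ hA _ hB x hx => ⟨_, inter_mem_coreConvexBasis hA hB, hx, subset_rfl⟩,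
    Set.sUnion_eq_univ_iff.2 fun _ => ⟨_, univ_mem_coreConvexBasis, trivial⟩, rfl⟩

theorem isOpen_tauc_of_mem {B : Set X} (hB : B ∈ coreConvexBasis X) : IsOpen[tauc X] B := by
  let := tauc X
  exact isTopologicalBasis_coreConvexBasis.isOpen hB

theorem continuous_tauc_affineMap (f : X →ᵃ[ℝ] Y) : Continuous[tauc X, tauc Y] f :=
  continuous_generateFrom_iff.2 fun _ hB => isOpen_tauc_of_mem (preimage_mem_coreConvexBasis f hB)

end CoreConvexBasis

theorem IsOpen.cor_eq {E : Type*} [AddCommGroup E] [Module ℝ E] [TopologicalSpace E]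
    [ContinuousAdd E] [ContinuousSMul ℝ E] {A : Set E} (hA : IsOpen A) : cor A = A := by
  refine (cor_subset A).antisymm fun x hx => ⟨hx, fun d => ?_⟩
  have hcont : Continuous fun lam : ℝ => x + lam • d := by fun_prop
  obtain ⟨ε, hε, hball⟩ := Metric.isOpen_iff.1 (hA.preimage hcont) 0 (by simpa using hx)
  refine ⟨ε / 2, by positivity, fun lam hlam => hball ?_⟩
  rw [Metric.mem_ball, Real.dist_0_eq_abs, abs_of_nonneg hlam.1]
  linarith [hlam.2]

theorem tauc_le_of_locallyConvexSpace {E : Type*} [AddCommGroup E] [Module ℝ E]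
    [t : TopologicalSpace E] [IsTopologicalAddGroup E] [ContinuousSMul ℝ E]
    [LocallyConvexSpace ℝ E] : tauc E ≤ t := by
  intro U hU
  refine (@isOpen_iff_forall_mem_open E (tauc E) U).2 fun x hx => ?_
  obtain ⟨S, ⟨hS, hSc⟩, hSU⟩ :=
    (LocallyConvexSpace.convex_basis (𝕜 := ℝ) x).mem_iff.1 (hU.mem_nhds hx)
  exact ⟨interior S, interior_subset.trans hSU,
    isOpen_tauc_of_mem ⟨hSc.interior, isOpen_interior.cor_eq⟩, mem_interior_iff_mem_nhds.2 hS⟩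

section Balanced

variable {X : Type*} [AddCommGroup X] [Module ℝ X]

theorem exists_balanced_mem_coreConvexBasis {B : Set X} (hB : B ∈ coreConvexBasis X) {z : X}
    (hz : z ∈ B) :
    ∃ D ∈ coreConvexBasis X, (0 : X) ∈ D ∧ Balanced ℝ D ∧ ∀ w ∈ D, z + w ∈ B := by
  have hD := inter_mem_coreConvexBasis (setOf_add_smul_mem_coreConvexBasis hB z 1)
    (setOf_add_smul_mem_coreConvexBasis hB z (-1))
  refine ⟨_, hD, by simpa using hz, (balanced_iff_neg_mem hD.1).2 fun w hw => ?_,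
    fun w hw => by simpa using hw.1⟩
  exact ⟨by simpa using hw.2, by simpa using hw.1⟩

theorem exists_pos_forall_abs_le_smul_mem {D : Set X} (hD : D ∈ coreConvexBasis X)
    (h0 : (0 : X) ∈ D) (hbal : Balanced ℝ D) (x : X) :
    ∃ δ > 0, ∀ μ : ℝ, |μ| ≤ δ → μ • x ∈ D := by
  obtain ⟨δ, hδ, h⟩ := (hD.2.symm ▸ h0 : (0 : X) ∈ cor D).2 x
  have hδx : δ • x ∈ D := by simpa using h δ ⟨hδ.le, le_rfl⟩
  refine ⟨δ, hδ, fun μ hμ => ?_⟩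
  have hnorm : ‖μ / δ‖ ≤ 1 := by
    rw [Real.norm_eq_abs, abs_div, abs_of_pos hδ, div_le_one hδ]
    exact hμ
  simpa [smul_smul, div_mul_cancel₀ μ hδ.ne'] using hbal.smul_mem hnorm hδx

end Balanced

section Tauc

variable (X : Type*) [AddCommGroup X] [Module ℝ X]

theorem t2Space_tauc : letI := tauc X; T2Space X := by
  let := tauc X
  refine ⟨fun x y hxy => ?_⟩
  obtain ⟨f, hf⟩ := Module.Projective.exists_dual_ne_zero ℝ (sub_ne_zero.2 hxy)
  have hcont : Continuous f :=
    continuous_le_rng tauc_le_of_locallyConvexSpace (continuous_tauc_affineMap f.toAffineMap)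
  exact separated_by_continuous hcont (by simpa [sub_eq_zero] using hf)

theorem locallyConvexSpace_tauc : letI := tauc X; LocallyConvexSpace ℝ X := by
  let := tauc X
  exact LocallyConvexSpace.ofBases ℝ X (fun _ B => B) (fun x B => B ∈ coreConvexBasis X ∧ x ∈ B)
    (fun _ => isTopologicalBasis_coreConvexBasis.nhds_hasBasis) fun _ _ hB => hB.1.1

theorem continuousAdd_tauc : letI := tauc X; ContinuousAdd X := by
  let := tauc X
  refine ⟨continuous_generateFrom_iff.2 fun B hB => isOpen_prod_iff.2 fun x y hxy => ?_⟩
  refine ⟨{u | (y - x) + (2 : ℝ) • u ∈ B}, {v | (x - y) + (2 : ℝ) • v ∈ B},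
    isOpen_tauc_of_mem (setOf_add_smul_mem_coreConvexBasis hB _ _),
    isOpen_tauc_of_mem (setOf_add_smul_mem_coreConvexBasis hB _ _), ?_, ?_, ?_⟩
  · simpa [two_smul, add_comm] using hxy
  · simpa [two_smul] using hxy
  · rintro ⟨u, v⟩ ⟨hu, hv⟩
    have hmid := hB.1 hu hv (by norm_num : (0 : ℝ) ≤ 2⁻¹) (by norm_num : (0 : ℝ) ≤ 2⁻¹)
      (by norm_num)
    show u + v ∈ B
    convert hmid using 1
    module

theorem continuousSMul_tauc : letI := tauc X; ContinuousSMul ℝ X := by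
  let := tauc X
  refine ⟨continuous_generateFrom_iff.2 fun B hB => isOpen_prod_iff.2 fun t x htx => ?_⟩
  obtain ⟨D, hD, h0, hbal, hDB⟩ := exists_balanced_mem_coreConvexBasis hB htx
  obtain ⟨δ, hδ, hδx⟩ := exists_pos_forall_abs_le_smul_mem hD h0 hbal x
  set ε := min (δ / 2) 1
  have hε : 0 < ε := lt_min (by positivity) one_pos
  set k : ℝ := 2 * (|t| + 1)
  have hk : 0 < k := by positivity
  refine ⟨Set.Ioo (t - ε) (t + ε), {p | -(k • x) + k • p ∈ D}, isOpen_Ioo,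
    isOpen_tauc_of_mem (setOf_add_smul_mem_coreConvexBasis hD _ _), ⟨by linarith, by linarith⟩,
    by simpa using h0, ?_⟩
  rintro ⟨s, p⟩ ⟨hs, hp⟩
  have hst : |s - t| < ε := abs_sub_lt_iff.2 ⟨by linarith [hs.2], by linarith [hs.1]⟩
  have hs_abs : |s| ≤ |t| + 1 := by
    have := abs_sub_abs_le_abs_sub s t
    linarith [min_le_right (δ / 2) 1]
  have h1 : (2 * (s - t)) • x ∈ D := by
    refine hδx _ ?_
    rw [abs_mul, abs_two]
    linarith [min_le_left (δ / 2) 1]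
  have h2 : (2 * s / k) • (-(k • x) + k • p) ∈ D := by
    refine hbal.smul_mem ?_ hp
    rw [Real.norm_eq_abs, abs_div, abs_mul, abs_two, abs_of_pos hk, div_le_one hk]
    linarith
  have hmid := hD.1 h1 h2 (by norm_num : (0 : ℝ) ≤ 2⁻¹) (by norm_num : (0 : ℝ) ≤ 2⁻¹)
    (by norm_num)
  -- `s • p = t • x + 2⁻¹ • (2 * (s - t)) • x + 2⁻¹ • (2 * s / k) • w` with `w = k • (p - x)`
  show s • p ∈ B
  convert hDB _ hmid using 1
  match_scalars <;> field_simp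
  ring

end Tauc

/-- `(X, τ_c)` is a Hausdorff locally convex topological vector space:
addition and scalar multiplication are `τ_c`-continuous, `τ_c` is Hausdorff, and every
point has a neighborhood basis of convex sets. -/
theorem stmt4 (X : Type*) [AddCommGroup X] [Module ℝ X] :
    letI : TopologicalSpace X := tauc X
    ContinuousAdd X ∧ ContinuousSMul ℝ X ∧ T2Space X ∧ LocallyConvexSpace ℝ X :=
  ⟨continuousAdd_tauc X, continuousSMul_tauc X, t2Space_tauc X, locallyConvexSpace_tauc X⟩
end

section
/- Let X be a real vector space equipped with the core convex topology τ_c, and let A ⊆ X be a convex set. Then the τ_c-interior of A equals the algebraic interior of A: int_c(A) = cor(A). -/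
open Pointwise

section Aux
variable {X : Type*} [AddCommGroup X] [Module ℝ X]

lemma cor_mono {A B : Set X} (h : A ⊆ B) : cor A ⊆ cor B := by
  rintro x ⟨hx, hd⟩
  refine ⟨h hx, fun d => ?_⟩
  obtain ⟨δ, hδ, hδ'⟩ := hd d
  exact ⟨δ, hδ, fun lam hl => h (hδ' lam hl)⟩

lemma seg_mem_cor {A : Set X} (hA : Convex ℝ A) {a b : X} (ha : a ∈ cor A) (hb : b ∈ A)
    {t : ℝ} (ht0 : 0 ≤ t) (ht1 : t < 1) : (1 - t) • a + t • b ∈ cor A := by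
  obtain ⟨haA, hacor⟩ := ha
  have h1t : 0 < 1 - t := by linarith
  refine ⟨hA haA hb h1t.le ht0 (by ring), fun d => ?_⟩
  obtain ⟨δ, hδ, h⟩ := hacor d
  refine ⟨(1 - t) * δ, by positivity, fun lam hl => ?_⟩
  obtain ⟨hl0, hl1⟩ := hl
  have hmu : lam / (1 - t) ∈ Set.Icc (0 : ℝ) δ := by
    constructor
    · exact div_nonneg hl0 h1t.le
    · rw [div_le_iff₀ h1t]; linarith
  have heq : (1 - t) * (lam / (1 - t)) = lam := by field_simp
  have key : (1 - t) • a + t • b + lam • d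
      = (1 - t) • (a + (lam / (1 - t)) • d) + t • b := by
    rw [smul_add, smul_smul, heq]; abel
  rw [key]
  exact hA (h _ hmu) hb h1t.le ht0 (by ring)

lemma cor_idem {A : Set X} (hA : Convex ℝ A) : cor (cor A) = cor A := by
  apply Set.Subset.antisymm (fun x hx => hx.1)
  intro x hx
  refine ⟨hx, fun d => ?_⟩
  obtain ⟨δ, hδ, h⟩ := hx.2 d
  have hb : x + δ • d ∈ A := h δ ⟨hδ.le, le_rfl⟩
  refine ⟨δ / 2, half_pos hδ, fun lam hl => ?_⟩
  obtain ⟨hl0, hl1⟩ := hl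
  have ht0 : 0 ≤ lam / δ := div_nonneg hl0 hδ.le
  have ht1 : lam / δ < 1 := by rw [div_lt_one hδ]; linarith
  have heq : δ * (lam / δ) = lam := by field_simp
  have key : x + lam • d = (1 - lam / δ) • x + (lam / δ) • (x + δ • d) := by
    rw [smul_add, smul_smul, mul_comm, heq, sub_smul, one_smul]; abel
  rw [key]
  exact seg_mem_cor hA hx hb ht0 ht1

lemma cor_convex {A : Set X} (hA : Convex ℝ A) : Convex ℝ (cor A) := by
  intro x hx y hy s t hs ht hst
  refine ⟨hA hx.1 hy.1 hs ht hst, fun d => ?_⟩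
  obtain ⟨δ₁, hδ₁, h₁⟩ := hx.2 d
  obtain ⟨δ₂, hδ₂, h₂⟩ := hy.2 d
  refine ⟨min δ₁ δ₂, lt_min hδ₁ hδ₂, fun lam hl => ?_⟩
  obtain ⟨hl0, hl1⟩ := hl
  have m₁ : x + lam • d ∈ A := h₁ lam ⟨hl0, hl1.trans (min_le_left _ _)⟩
  have m₂ : y + lam • d ∈ A := h₂ lam ⟨hl0, hl1.trans (min_le_right _ _)⟩
  have key : s • x + t • y + lam • d = s • (x + lam • d) + t • (y + lam • d) := by
    have hs' : s = 1 - t := by linarith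
    subst hs'
    module
  rw [key]
  exact hA m₁ m₂ hs ht hst

lemma open_subset_cor {U : Set X}
    (hU : TopologicalSpace.GenerateOpen {A : Set X | Convex ℝ A ∧ cor A = A} U) :
    U ⊆ cor U := by
  induction hU with
  | basic A h => rw [h.2]
  | univ => exact fun x _ => ⟨trivial, fun d => ⟨1, one_pos, fun _ _ => trivial⟩⟩
  | inter U V hU hV ihU ihV =>
    intro x hx
    obtain ⟨hxU, hU'⟩ := ihU hx.1
    obtain ⟨hxV, hV'⟩ := ihV hx.2
    refine ⟨⟨hxU, hxV⟩, fun d => ?_⟩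
    obtain ⟨δ₁, hδ₁, h₁⟩ := hU' d
    obtain ⟨δ₂, hδ₂, h₂⟩ := hV' d
    refine ⟨min δ₁ δ₂, lt_min hδ₁ hδ₂, fun lam hl => ?_⟩
    exact ⟨h₁ lam ⟨hl.1, hl.2.trans (min_le_left _ _)⟩,
      h₂ lam ⟨hl.1, hl.2.trans (min_le_right _ _)⟩⟩
  | sUnion S hS ih =>
    intro x hx
    obtain ⟨U, hUS, hxU⟩ := hx
    exact cor_mono (Set.subset_sUnion_of_mem hUS) (ih U hUS hxU)

end Aux

/-- For a convex set `A` in `X`, the interior of `A` with respect to the core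
convex topology equals the algebraic interior: `int_c A = cor A`. -/
theorem stmt6 {X : Type*} [AddCommGroup X] [Module ℝ X] {A : Set X} (hA : Convex ℝ A) :
    @interior X (tauc X) A = cor A := by
  letI : TopologicalSpace X := tauc X
  apply Set.Subset.antisymm
  · have hop : IsOpen (interior A) := isOpen_interior
    have h1 : interior A ⊆ cor (interior A) := open_subset_cor hop
    exact fun x hx => cor_mono interior_subset (h1 hx)
  · refine interior_maximal (fun x hx => hx.1) ?_
    exact TopologicalSpace.GenerateOpen.basic _ ⟨cor_convex hA, cor_idem hA⟩
end

section
/- Let X be a real vector space equipped with the core convex topology τ_c, and let A ⊆ X be a convex set. Then the relative interior of A with respect to τ_c (the set of points a ∈ A admitting a τ_c-open set U with a ∈ U and U ∩ aff(A) ⊆ A) equals the relative algebraic interior icr(A). -/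
open Pointwise

section Aux

variable {X : Type*} [AddCommGroup X] [Module ℝ X] {A : Set X}

lemma span_sub_eq_vectorSpan (A : Set X) :
    Submodule.span ℝ (A - A) = vectorSpan ℝ A := by
  rw [vectorSpan_def]
  congr 1

lemma icr_seg (hA : Convex ℝ A) {p q : X} (hp : p ∈ icr A) (hq : q ∈ A)
    {t : ℝ} (ht0 : 0 ≤ t) (ht1 : t < 1) : (1 - t) • p + t • q ∈ icr A := by
  obtain ⟨hpA, hpd⟩ := hp
  refine ⟨hA hpA hq (by linarith) ht0 (by ring), ?_⟩
  intro d hd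
  obtain ⟨δ, hδ, hseg⟩ := hpd d hd
  refine ⟨(1 - t) * δ, by nlinarith, ?_⟩
  intro lam ⟨hl0, hl1⟩
  have h1t : (0:ℝ) < 1 - t := by linarith
  have key : (1 - t) • p + t • q + lam • d
      = (1 - t) • (p + (lam / (1 - t)) • d) + t • q := by
    rw [smul_add, smul_smul, mul_div_cancel₀ _ (ne_of_gt h1t)]
    abel
  rw [key]
  exact hA (hseg _ ⟨by positivity, by rw [div_le_iff₀ h1t]; linarith [mul_comm δ (1-t)]⟩) hq
    (le_of_lt h1t) ht0 (by ring)

lemma icr_move (hA : Convex ℝ A) {p : X} (hp : p ∈ icr A) {d : X}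
    (hd : d ∈ Submodule.span ℝ (A - A)) :
    ∃ δ : ℝ, 0 < δ ∧ ∀ lam ∈ Set.Icc (0 : ℝ) δ, p + lam • d ∈ icr A := by
  obtain ⟨δ, hδ, hseg⟩ := hp.2 d hd
  refine ⟨δ / 2, by positivity, ?_⟩
  intro lam ⟨hl0, hl1⟩
  have key : p + lam • d = (1 - lam / δ) • p + (lam / δ) • (p + δ • d) := by
    rw [smul_add, smul_smul, div_mul_cancel₀ _ (ne_of_gt hδ)]
    module
  rw [key]
  exact icr_seg hA hp (hseg δ ⟨le_of_lt hδ, le_refl _⟩) (by positivity)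
    (by rw [div_lt_one hδ]; linarith)

lemma icr_convex (hA : Convex ℝ A) : Convex ℝ (icr A) := by
  intro p hp q hq s t hs ht hst
  rcases eq_or_lt_of_le (show t ≤ 1 by linarith) with h | h
  · have hs0 : s = 0 := by linarith
    simp [hs0, h, hq]
  · have : s = 1 - t := by linarith
    rw [this]
    exact icr_seg hA hp hq.1 ht h

lemma open_cor {U : Set X}
    (hU : TopologicalSpace.GenerateOpen {A : Set X | Convex ℝ A ∧ cor A = A} U) :
    ∀ a ∈ U, ∀ d : X, ∃ δ : ℝ, 0 < δ ∧ ∀ lam ∈ Set.Icc (0 : ℝ) δ, a + lam • d ∈ U := by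
  induction hU with
  | basic V hV =>
      intro a ha d
      rw [← hV.2] at ha
      exact ha.2 d
  | univ => intro a _ d; exact ⟨1, one_pos, fun _ _ => trivial⟩
  | inter V W _ _ ihV ihW =>
      intro a ha d
      obtain ⟨δ₁, h1, hs1⟩ := ihV a ha.1 d
      obtain ⟨δ₂, h2, hs2⟩ := ihW a ha.2 d
      exact ⟨min δ₁ δ₂, lt_min h1 h2, fun lam hl =>
        ⟨hs1 lam ⟨hl.1, hl.2.trans (min_le_left _ _)⟩,
         hs2 lam ⟨hl.1, hl.2.trans (min_le_right _ _)⟩⟩⟩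
  | sUnion S _ ih =>
      intro a ha d
      obtain ⟨t, htS, hat⟩ := ha
      obtain ⟨δ, hδ, hs⟩ := ih t htS a hat d
      exact ⟨δ, hδ, fun lam hl => ⟨t, htS, hs lam hl⟩⟩

theorem stmt7' {X : Type*} [AddCommGroup X] [Module ℝ X] {A : Set X} (hA : Convex ℝ A) :
    {a | a ∈ A ∧ ∃ U : Set X,
      (TopologicalSpace.generateFrom {A : Set X | Convex ℝ A ∧ cor A = A}).IsOpen U ∧ a ∈ U ∧
      U ∩ (affineSpan ℝ A : Set X) ⊆ A} = icr A := by
  ext a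
  simp only [Set.mem_setOf_eq]
  constructor
  · rintro ⟨haA, U, hU, haU, hsub⟩
    refine ⟨haA, fun d hd => ?_⟩
    obtain ⟨δ, hδ, hs⟩ := open_cor hU a haU d
    refine ⟨δ, hδ, fun lam hl => hsub ⟨hs lam hl, ?_⟩⟩
    have haff : a ∈ affineSpan ℝ A := subset_affineSpan ℝ A haA
    have hdir : lam • d ∈ (affineSpan ℝ A).direction := by
      rw [direction_affineSpan, ← span_sub_eq_vectorSpan]
      exact Submodule.smul_mem _ _ hd
    have := AffineSubspace.vadd_mem_of_mem_direction hdir haff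
    simpa [vadd_eq_add, add_comm] using this
  · intro ha
    obtain ⟨N, hN⟩ := Submodule.exists_isCompl (Submodule.span ℝ (A - A))
    refine ⟨ha.1, icr A + (N : Set X), ?_, ⟨a, ha, 0, N.zero_mem, add_zero a⟩, ?_⟩
    · apply TopologicalSpace.GenerateOpen.basic
      constructor
      · exact (icr_convex hA).add N.convex
      · apply Set.Subset.antisymm (fun x hx => hx.1)
        rintro x ⟨p, hp, n, hn, rfl⟩
        refine ⟨⟨p, hp, n, hn, rfl⟩, fun d => ?_⟩
        have hd : d ∈ Submodule.span ℝ (A - A) ⊔ N := by rw [hN.sup_eq_top]; trivial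
        obtain ⟨l, hl, m, hm, rfl⟩ := Submodule.mem_sup.1 hd
        obtain ⟨δ, hδ, hs⟩ := icr_move hA hp hl
        exact ⟨δ, hδ, fun lam hlam =>
          ⟨p + lam • l, hs lam hlam, n + lam • m,
            N.add_mem hn (N.smul_mem _ hm), by module⟩⟩
    · rintro u ⟨⟨p, hp, n, hn, rfl⟩, huaff⟩
      have haff : a ∈ affineSpan ℝ A := subset_affineSpan ℝ A ha.1
      have hpaff : p ∈ affineSpan ℝ A := subset_affineSpan ℝ A hp.1
      have h1 : (p + n) - a ∈ Submodule.span ℝ (A - A) := by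
        rw [span_sub_eq_vectorSpan, ← direction_affineSpan]
        exact AffineSubspace.vsub_mem_direction huaff haff
      have h2 : p - a ∈ Submodule.span ℝ (A - A) := by
        rw [span_sub_eq_vectorSpan, ← direction_affineSpan]
        exact AffineSubspace.vsub_mem_direction hpaff haff
      have h3 : n ∈ Submodule.span ℝ (A - A) := by
        have := Submodule.sub_mem _ h1 h2
        simpa using this
      have hn0 : n = 0 := by
        have : n ∈ Submodule.span ℝ (A - A) ⊓ N := ⟨h3, hn⟩
        rwa [hN.inf_eq_bot, Submodule.mem_bot] at this
      simpa [hn0] using hp.1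


end Aux

/-- For a convex set `A` in `X`, the relative interior of `A` with respect to
`τ_c` (points of `A` admitting a `τ_c`-open set `U` with `a ∈ U` and `U ∩ aff A ⊆ A`)
equals the relative algebraic interior `icr A`. -/
theorem stmt7 {X : Type*} [AddCommGroup X] [Module ℝ X] {A : Set X} (hA : Convex ℝ A) :
    {a | a ∈ A ∧ ∃ U : Set X, (tauc X).IsOpen U ∧ a ∈ U ∧
      U ∩ (affineSpan ℝ A : Set X) ⊆ A} = icr A :=
  stmt7' hA
end

section
/- Let X be a real vector space equipped with the core convex topology τ_c, and let A ⊆ X be a convex, relatively solid set (icr(A) ≠ ∅). Then the vectorial closure of A equals the τ_c-closure of A: vcl(A) = cl_c(A). -/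
open Pointwise

/-!
The inclusion `vcl A ⊆ cl_c A` holds for every set, because a basic `τ_c`-open set containing
`b` contains a whole segment `[b, b + δ d]`. Conversely, if `b ∉ vcl A` and `a ∈ icr A`, some
point `z = b + t (a - b)` with `0 < t < 1` lies outside `A`. The gauge of `A - a`, taken inside
`L(A) = span (A - A)` where `A - a` is absorbent, dominates a functional that equals `1` at
`z - a`; extended to `X` it gives `f` with `f (x - a) ≤ 1` on `A` and
`f (b - a) = 1 / (1 - t) > 1`. Since open half-spaces are `τ_c`-open, `b ∉ cl_c A`.
-/

open Set Filter Topology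

section Core

variable {X : Type*} [AddCommGroup X] [Module ℝ X]

theorem mem_cor_iff {A : Set X} {x : X} :
    x ∈ cor A ↔ ∀ d : X, ∀ᶠ t in 𝓝[≥] (0 : ℝ), x + t • d ∈ A := by
  simp only [cor, mem_ofPred_eq, nhdsGE_basis_Icc.eventually_iff]
  refine ⟨fun h => h.2, fun h => ⟨?_, h⟩⟩
  obtain ⟨δ, hδ, hA⟩ := h 0
  simpa using hA (left_mem_Icc.2 hδ.le)

theorem cor_inter (A B : Set X) : cor (A ∩ B) = cor A ∩ cor B := by
  ext x
  simp only [mem_inter_iff, mem_cor_iff, eventually_and, forall_and]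

theorem cor_univ : cor (univ : Set X) = univ :=
  eq_univ_of_forall fun _ => mem_cor_iff.2 fun _ => univ_mem' fun _ => trivial

theorem cor_setOf_lt (f : X →ₗ[ℝ] ℝ) (c : ℝ) : cor {x | c < f x} = {x | c < f x} := by
  refine Subset.antisymm (fun _ hx => hx.1) fun x hx => mem_cor_iff.2 fun d => ?_
  have hopen : IsOpen {t : ℝ | c < f x + t * f d} := isOpen_lt continuous_const (by fun_prop)
  filter_upwards [nhdsWithin_le_nhds (hopen.mem_nhds (by simpa using hx))] with t ht
  simpa using ht

end Core

section CoreConvexTopology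

variable {X : Type*} [AddCommGroup X] [Module ℝ X]

theorem isTopologicalBasis_tauc :
    @TopologicalSpace.IsTopologicalBasis X (tauc X) {A : Set X | Convex ℝ A ∧ cor A = A} := by
  let := tauc X
  refine ⟨?_, ?_, rfl⟩
  · rintro U ⟨hUc, hU⟩ V ⟨hVc, hV⟩ x hx
    exact ⟨U ∩ V, ⟨hUc.inter hVc, by rw [cor_inter, hU, hV]⟩, hx, subset_rfl⟩
  · exact sUnion_eq_univ_iff.2 fun _ => ⟨univ, ⟨convex_univ, cor_univ⟩, trivial⟩

theorem isOpen_tauc_setOf_lt (f : X →ₗ[ℝ] ℝ) (c : ℝ) : IsOpen[tauc X] {x | c < f x} :=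
  let := tauc X
  isTopologicalBasis_tauc.isOpen ⟨convex_halfSpace_gt f.isLinear c, cor_setOf_lt f c⟩

theorem vcl_subset_closure_tauc (A : Set X) : vcl A ⊆ closure[tauc X] A := by
  let := tauc X
  rintro b ⟨d, hd⟩
  rw [isTopologicalBasis_tauc.mem_closure_iff]
  rintro U ⟨-, hU⟩ hbU
  rw [← hU] at hbU
  obtain ⟨δ, hδ, hseg⟩ := hbU.2 d
  obtain ⟨t, ht, htA⟩ := hd δ hδ
  exact ⟨b + t • d, hseg t ht, htA⟩

end CoreConvexTopology

section Separation

variable {E : Type*} [AddCommGroup E] [Module ℝ E]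

theorem Convex.exists_linearMap_eq_one_of_absorbent {s : Set E} (hs₁ : Convex ℝ s)
    (hs₀ : 0 ∈ s) (hs₂ : Absorbent ℝ s) {x₀ : E} (hx₀ : x₀ ∉ s) :
    ∃ f : E →ₗ[ℝ] ℝ, f x₀ = 1 ∧ ∀ x ∈ s, f x ≤ 1 := by
  set f : E →ₗ.[ℝ] ℝ :=
    LinearPMap.mkSpanSingleton x₀ 1 (ne_of_mem_of_not_mem hs₀ hx₀).symm
  have hdom : ∀ x : f.domain, f x ≤ gauge s x := by
    rintro ⟨x, hx⟩
    obtain ⟨y, rfl⟩ := Submodule.mem_span_singleton.1 hx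
    rw [LinearPMap.mkSpanSingleton'_apply, smul_eq_mul, mul_one]
    rcases le_or_gt y 0 with hy | hy
    · exact hy.trans (gauge_nonneg _)
    · rw [gauge_smul_of_nonneg hy.le, smul_eq_mul]
      exact le_mul_of_one_le_right hy.le
        (one_le_gauge_of_notMem (hs₁.starConvex hs₀) (hs₂ x₀) hx₀)
  obtain ⟨g, hgx₀, hg⟩ := exists_extension_of_le_sublinear _ (gauge s)
    (fun c hc => gauge_smul_of_nonneg hc.le) (gauge_add_le hs₁ hs₂) hdom
  refine ⟨g, ?_, fun x hx => (hg x).trans (gauge_le_one_of_mem hx)⟩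
  exact (hgx₀ ⟨x₀, Submodule.mem_span_singleton_self x₀⟩).trans
    (LinearPMap.mkSpanSingleton'_apply_self _ _ _ _)

variable {X : Type*} [AddCommGroup X] [Module ℝ X]

theorem absorbent_of_mem_icr {A : Set X} {a : X} (ha : a ∈ icr A) :
    Absorbent ℝ {m : Submodule.span ℝ (A - A) | a + (m : X) ∈ A} := by
  rw [absorbent_iff_eventually_nhdsNE_zero]
  intro m
  obtain ⟨δ₁, hδ₁, hpos⟩ := ha.2 m m.2
  obtain ⟨δ₂, hδ₂, hneg⟩ := ha.2 (-m) (neg_mem m.2)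
  filter_upwards [nhdsWithin_le_nhds (Ioo_mem_nhds (neg_lt_zero.2 hδ₂) hδ₁)] with c hc
  rcases le_total 0 c with hc0 | hc0
  · exact hpos c ⟨hc0, hc.2.le⟩
  · simpa using hneg (-c) ⟨neg_nonneg.2 hc0, by linarith [hc.1]⟩

theorem Convex.exists_linearMap_of_mem_icr_of_notMem {A : Set X} (hA : Convex ℝ A) {a z : X}
    (ha : a ∈ icr A) (hz : z ∉ A) :
    ∃ f : X →ₗ[ℝ] ℝ, f (z - a) = 1 ∧ ∀ x ∈ A, f (x - a) ≤ 1 := by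
  set M := Submodule.span ℝ (A - A)
  have hAM : ∀ x ∈ A, x - a ∈ M := fun x hx => Submodule.subset_span (sub_mem_sub hx ha.1)
  by_cases hzM : z - a ∈ M
  · set s : Set M := {m | a + (m : X) ∈ A}
    have hs₁ : Convex ℝ s := (hA.translate_preimage_right a).linear_preimage M.subtype
    obtain ⟨g, hgz, hgA⟩ := hs₁.exists_linearMap_eq_one_of_absorbent
      (by simpa [s] using ha.1) (absorbent_of_mem_icr ha) (x₀ := ⟨z - a, hzM⟩)
      (by simpa [s] using hz)
    obtain ⟨f, hfg⟩ := g.exists_extend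
    have hf : ∀ m : M, f m = g m := LinearMap.congr_fun hfg
    exact ⟨f, (hf ⟨_, hzM⟩).trans hgz,
      fun x hx => (hf ⟨_, hAM x hx⟩).trans_le (hgA _ (by simpa [s] using hx))⟩
  · obtain ⟨f, hf0, hfz⟩ := LinearMap.exists_extend_of_notMem (0 : M →ₗ[ℝ] ℝ) hzM 1
    exact ⟨f, hfz, fun x hx =>
      (LinearMap.congr_fun hf0 ⟨_, hAM x hx⟩).le.trans zero_le_one⟩

end Separation

theorem closure_tauc_subset_vcl {X : Type*} [AddCommGroup X] [Module ℝ X] {A : Set X}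
    (hA : Convex ℝ A) {a : X} (ha : a ∈ icr A) : closure[tauc X] A ⊆ vcl A := by
  let := tauc X
  intro b hb
  by_contra hnb
  obtain ⟨δ, hδ, hmiss⟩ :
      ∃ δ > 0, ∀ t ∈ Icc (0 : ℝ) δ, b + t • (a - b) ∉ A := by
    simpa [vcl] using fun h => hnb ⟨a - b, h⟩
  set t := min δ (1 / 2)
  have ht₀ : 0 < t := lt_min hδ one_half_pos
  have ht₁ : t < 1 := (min_le_right _ _).trans_lt one_half_lt_one
  obtain ⟨f, hfz, hfA⟩ := hA.exists_linearMap_of_mem_icr_of_notMem ha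
    (hmiss t ⟨ht₀.le, min_le_left _ _⟩)
  have hfb : 1 < f (b - a) := by
    have hz : b + t • (a - b) - a = (1 - t) • (b - a) := by module
    rw [hz, map_smul, smul_eq_mul] at hfz
    nlinarith
  obtain ⟨x, hxU, hxA⟩ := mem_closure_iff.1 hb _ (isOpen_tauc_setOf_lt f (f a + 1))
    (show f a + 1 < f b by linarith [map_sub f b a])
  linarith [hfA x hxA, map_sub f x a, show f a + 1 < f x from hxU]

/-- For a convex, relatively solid set `A` in `X`, the vectorial closure of
`A` equals the closure of `A` with respect to the core convex topology. -/
theorem stmt12 {X : Type*} [AddCommGroup X] [Module ℝ X] {A : Set X}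
    (hA : Convex ℝ A) (hsolid : (icr A).Nonempty) :
    vcl A = @closure X (tauc X) A := by
  obtain ⟨a, ha⟩ := hsolid
  exact (vcl_subset_closure_tauc A).antisymm (closure_tauc_subset_vcl hA ha)
end

section
/- Let X be a real vector space equipped with the core convex topology τ_c, and let {x_i}_{i∈I} be a Hamel basis of X. Then 0 does not belong to the τ_c-closure of the set {x_i : i ∈ I}. -/
open Pointwise

/-! The ℓ¹-norm of the coordinates in the basis `e` is a seminorm on `X`. The open ball of any
seminorm is convex and equal to its core, hence `τ_c`-open; the unit ball contains `0` but no basis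
vector, since each basis vector has norm `1`. -/

open scoped Topology

namespace Finsupp

variable {ι 𝕜 : Type*} [NormedField 𝕜]

theorem sum_norm_eq_of_support_subset (g : ι →₀ 𝕜) {s : Finset ι} (hs : g.support ⊆ s) :
    (g.sum fun _ a => ‖a‖) = ∑ i ∈ s, ‖g i‖ :=
  g.sum_of_support_subset hs _ fun _ _ => norm_zero

noncomputable def l1Seminorm : Seminorm 𝕜 (ι →₀ 𝕜) :=
  Seminorm.of (fun g => g.sum fun _ a => ‖a‖)
    (fun g h => by
      classical
      rw [sum_norm_eq_of_support_subset (g + h) support_add,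
        sum_norm_eq_of_support_subset g Finset.subset_union_left,
        sum_norm_eq_of_support_subset h Finset.subset_union_right, ← Finset.sum_add_distrib]
      exact Finset.sum_le_sum fun i _ => norm_add_le (g i) (h i))
    (fun c g => by
      rw [sum_norm_eq_of_support_subset (c • g) support_smul,
        sum_norm_eq_of_support_subset g subset_rfl, Finset.mul_sum]
      simp only [coe_smul, Pi.smul_apply, smul_eq_mul, norm_mul])

theorem l1Seminorm_apply (g : ι →₀ 𝕜) : l1Seminorm g = g.sum fun _ a => ‖a‖ := rfl

theorem l1Seminorm_single (i : ι) (a : 𝕜) : l1Seminorm (single i a) = ‖a‖ := by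
  rw [l1Seminorm_apply]
  exact sum_single_index norm_zero

end Finsupp

section CoreConvexTopology

variable {X : Type*} [AddCommGroup X] [Module ℝ X]

theorem cor_seminorm_ball (p : Seminorm ℝ X) (x : X) (r : ℝ) : cor (p.ball x r) = p.ball x r := by
  refine subset_antisymm (fun y hy => hy.1) fun y hy => ⟨hy, fun d => ?_⟩
  rw [Seminorm.mem_ball] at hy
  have hgap : 0 < r - p (y - x) := sub_pos.2 hy
  refine ⟨(r - p (y - x)) / (p d + 1), by positivity, fun lam ⟨hlam0, hlamδ⟩ => ?_⟩
  rw [Seminorm.mem_ball]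
  have hstep : lam * p d < r - p (y - x) :=
    calc lam * p d ≤ (r - p (y - x)) / (p d + 1) * p d := by gcongr
      _ < r - p (y - x) := by
        rw [div_mul_eq_mul_div, div_lt_iff₀ (by positivity)]
        nlinarith
  calc p (y + lam • d - x) = p ((y - x) + lam • d) := by rw [add_sub_right_comm]
    _ ≤ p (y - x) + lam * p d := by
        grw [map_add_le_add, map_smul_eq_mul, Real.norm_of_nonneg hlam0]
    _ < r := by linarith

theorem isOpen_tauc_seminorm_ball (p : Seminorm ℝ X) (x : X) (r : ℝ) :
    IsOpen[tauc X] (p.ball x r) :=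
  TopologicalSpace.isOpen_generateFrom_of_mem ⟨p.convex_ball x r, cor_seminorm_ball p x r⟩

end CoreConvexTopology

/-- If `{x i}` is a Hamel basis of `X`, then `0` is not in the
`τ_c`-closure of the set of basis vectors. -/
theorem stmt14 {X : Type*} [AddCommGroup X] [Module ℝ X] {ι : Type*} (e : Module.Basis ι ℝ X) :
    (0 : X) ∉ @closure X (tauc X) (Set.range e) := by
  set p : Seminorm ℝ X := Finsupp.l1Seminorm.comp e.repr.toLinearMap
  have hp : ∀ i, p (e i) = 1 := fun i => by
    simp [p, Finsupp.l1Seminorm_single]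
  rw [@mem_closure_iff X (tauc X)]
  push Not
  refine ⟨p.ball 0 1, isOpen_tauc_seminorm_ball p 0 1, p.mem_ball_self one_pos, ?_⟩
  rw [Set.eq_empty_iff_forall_notMem]
  rintro _ ⟨hball, i, rfl⟩
  rw [Seminorm.mem_ball_zero, hp] at hball
  exact lt_irrefl 1 hball
end

section
/- Let X be a real vector space equipped with the core convex topology τ_c. Then (X, τ_c) has the Heine–Borel property: every subset of X that is τ_c-closed and von Neumann bounded in (X, τ_c) is τ_c-compact. Moreover, every τ_c-compact subset of X is contained in a finite-dimensional linear subspace of X. -/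
open Pointwise

/-!
Every linear functional is `τ_c`-continuous, since the preimage of an open interval is convex
and equal to its core. Hence a bounded or compact set has bounded image under every functional,
which confines it to a finite-dimensional subspace. There `τ_c` is the Euclidean topology: in
finite dimension a convex set is a neighbourhood of each point of its core. Heine–Borel in `ℝⁿ`
finishes the proof.
-/

open Set Filter Topology Bornology

section Cor

variable {X Y : Type*} [AddCommGroup X] [Module ℝ X] [AddCommGroup Y] [Module ℝ Y]

lemma mem_cor_preimage (T : Y →ₗ[ℝ] X) {A : Set X} {y : Y} (h : T y ∈ cor A) :
    y ∈ cor (T ⁻¹' A) :=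
  ⟨h.1, fun d => by simpa only [mem_preimage, map_add, map_smul] using h.2 (T d)⟩

lemma absorbent_of_zero_mem_cor {s : Set X} (h : (0 : X) ∈ cor s) : Absorbent ℝ s := by
  refine absorbent_iff_eventually_nhdsNE_zero.2 fun d => nhdsWithin_le_nhds ?_
  obtain ⟨δ₁, hδ₁, h₁⟩ := h.2 d
  obtain ⟨δ₂, hδ₂, h₂⟩ := h.2 (-d)
  filter_upwards [Ioo_mem_nhds (neg_lt_zero.2 hδ₂) hδ₁] with c hc
  rcases le_total 0 c with hc0 | hc0
  · simpa using h₁ c ⟨hc0, hc.2.le⟩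
  · simpa using h₂ (-c) ⟨neg_nonneg.2 hc0, by linarith [hc.1]⟩

lemma IsOpen.cor_eq_s16 [TopologicalSpace X] [ContinuousAdd X] [ContinuousSMul ℝ X] {U : Set X}
    (hU : IsOpen U) : cor U = U := by
  refine Subset.antisymm (fun x hx => hx.1) fun x hx => ⟨hx, fun d => ?_⟩
  have hline : ∀ᶠ t : ℝ in 𝓝 0, x + t • d ∈ U :=
    ((by fun_prop : Continuous fun t : ℝ => x + t • d).tendsto' 0 x (by simp)).eventually
      (hU.mem_nhds hx)
  obtain ⟨δ, hδ, hball⟩ := Metric.eventually_nhds_iff.1 hline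
  refine ⟨δ / 2, half_pos hδ, fun t ht => hball ?_⟩
  rw [Real.dist_0_eq_abs, abs_of_nonneg ht.1]
  linarith [ht.2]

lemma cor_preimage_of_isOpen [TopologicalSpace Y] [ContinuousAdd Y] [ContinuousSMul ℝ Y]
    (f : X →ₗ[ℝ] Y) {U : Set Y} (hU : IsOpen U) : cor (f ⁻¹' U) = f ⁻¹' U :=
  Subset.antisymm (fun _ hx => hx.1) fun _ hx => mem_cor_preimage f (hU.cor_eq_s16.symm ▸ hx)

lemma convexOn_gauge {s : Set X} (hs : Convex ℝ s) (ha : Absorbent ℝ s) :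
    ConvexOn ℝ univ (gauge s) :=
  ⟨convex_univ, fun x _ y _ a b ha' hb _ => by
    simpa only [gauge_smul_of_nonneg ha', gauge_smul_of_nonneg hb, smul_eq_mul] using
      gauge_add_le hs ha (a • x) (b • y)⟩

end Cor

section CorFiniteDimensional

variable {E : Type*} [NormedAddCommGroup E] [NormedSpace ℝ E] [FiniteDimensional ℝ E]

/-- The gauge of `s` is convex, hence continuous in finite dimension, so `{gauge s < 1}` is an
open neighbourhood of `0` inside `s`. -/
lemma Convex.mem_nhds_zero_of_absorbent {s : Set E} (hs : Convex ℝ s) (ha : Absorbent ℝ s) :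
    s ∈ 𝓝 0 := by
  have hcont : Continuous (gauge s) :=
    continuousOn_univ.1 ((convexOn_gauge hs ha).continuousOn isOpen_univ)
  refine mem_of_superset ((isOpen_lt hcont continuous_const).mem_nhds ?_)
    (setOfPred_gauge_lt_one_subset_self hs ha.zero_mem ha)
  simp [gauge_zero]

lemma Convex.mem_nhds_of_mem_cor {B : Set E} (hB : Convex ℝ B) {x : E} (hx : x ∈ cor B) :
    B ∈ 𝓝 x := by
  have h0 : (0 : E) ∈ cor ((x + ·) ⁻¹' B) :=
    ⟨by simpa using hx.1, fun d => by simpa only [mem_preimage, zero_add] using hx.2 d⟩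
  rw [← map_add_left_nhds_zero x]
  exact (hB.translate_preimage_right x).mem_nhds_zero_of_absorbent (absorbent_of_zero_mem_cor h0)

end CorFiniteDimensional

section FiniteDimensionalSubspace

variable {X : Type*} [AddCommGroup X] [Module ℝ X]

lemma LinearIndependent.exists_linearMap_apply_eq {K V W ι : Type*} [Field K] [AddCommGroup V]
    [Module K V] [AddCommGroup W] [Module K W] {v : ι → V} (hv : LinearIndependent K v)
    (w : ι → W) : ∃ g : V →ₗ[K] W, ∀ i, g (v i) = w i := by
  obtain ⟨g, hg⟩ := LinearMap.exists_extend ((Module.Basis.span hv).constr K w)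
  refine ⟨g, fun i => ?_⟩
  have hi := LinearMap.congr_fun hg (Module.Basis.span hv i)
  rwa [LinearMap.comp_apply, Module.Basis.constr_basis, Submodule.subtype_apply,
    Module.Basis.span_apply] at hi

/-- A set spanning an infinite-dimensional space contains an independent sequence `vₙ`, and a
functional with `f vₙ = n` is unbounded on it. -/
lemma exists_finiteDimensional_of_forall_isBounded_image {S : Set X}
    (h : ∀ f : X →ₗ[ℝ] ℝ, IsBounded (f '' S)) :
    ∃ Y : Submodule ℝ X, FiniteDimensional ℝ Y ∧ S ⊆ Y := by
  obtain ⟨b, hbS, hspan, hli⟩ := exists_linearIndependent ℝ S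
  refine ⟨Submodule.span ℝ S, ?_, Submodule.subset_span⟩
  rw [← hspan]
  refine FiniteDimensional.span_of_finite ℝ (not_infinite.1 fun hinf => ?_)
  let e := hinf.natEmbedding
  obtain ⟨g, hg⟩ := (hli.comp e e.injective).exists_linearMap_apply_eq fun n : ℕ => (n : ℝ)
  obtain ⟨C, hC⟩ := (h g).exists_norm_le
  obtain ⟨n, hn⟩ := exists_nat_gt C
  have hle := hC _ ⟨e n, hbS (e n).2, hg n⟩
  rw [Real.norm_natCast] at hle
  linarith

end FiniteDimensionalSubspace

section TopologicalModule

variable {X : Type*} [AddCommGroup X] [Module ℝ X] [TopologicalSpace X]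
  {E : Type*} [NormedAddCommGroup E] [NormedSpace ℝ E]

lemma Bornology.IsVonNBounded.isBounded_image {S : Set X} (hS : IsVonNBounded ℝ S)
    {f : X →ₗ[ℝ] E} (hf : Continuous f) : IsBounded (f '' S) :=
  (NormedSpace.isVonNBounded_iff ℝ).1 (hS.image (⟨f, hf⟩ : X →L[ℝ] E))

lemma isCompact_of_subset_range [FiniteDimensional ℝ E] {T : E →ₗ[ℝ] X}
    (hTinj : Function.Injective T) (hT : Continuous T) (hL : ∀ L : X →ₗ[ℝ] E, Continuous L)
    {S : Set X} (hS : IsClosed S) (hSb : IsVonNBounded ℝ S) (hST : S ⊆ range T) :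
    IsCompact S := by
  obtain ⟨L, hLT⟩ := T.exists_leftInverse_of_injective (LinearMap.ker_eq_bot.2 hTinj)
  have hK : IsCompact (T ⁻¹' S) :=
    Metric.isCompact_of_isClosed_isBounded (hS.preimage hT)
      ((hSb.isBounded_image (hL L)).subset fun k hk => ⟨T k, hk, LinearMap.congr_fun hLT k⟩)
  simpa [image_preimage_eq_of_subset hST] using hK.image hT

end TopologicalModule

section CoreConvexTopology

variable {X : Type*} [AddCommGroup X] [Module ℝ X]
  {E : Type*} [NormedAddCommGroup E] [NormedSpace ℝ E]

lemma continuous_tauc_of_finiteDimensional [FiniteDimensional ℝ E] (T : E →ₗ[ℝ] X) :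
    Continuous[inferInstance, tauc X] T :=
  continuous_generateFrom_iff.2 fun _ ⟨hA, hcor⟩ => isOpen_iff_mem_nhds.2 fun _ hx =>
    (hA.linear_preimage T).mem_nhds_of_mem_cor (mem_cor_preimage T (hcor.symm ▸ hx))

lemma continuous_tauc_linearMap (f : X →ₗ[ℝ] E) : Continuous[tauc X, inferInstance] f := by
  let : TopologicalSpace X := tauc X
  refine continuous_def.2 fun V hV => isOpen_iff_forall_mem_open.2 fun x hx => ?_
  obtain ⟨ε, hε, hball⟩ := Metric.isOpen_iff.1 hV (f x) hx
  refine ⟨f ⁻¹' Metric.ball (f x) ε, preimage_mono hball,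
    TopologicalSpace.isOpen_generateFrom_of_mem ⟨(convex_ball _ _).linear_preimage f, ?_⟩,
    Metric.mem_ball_self hε⟩
  exact cor_preimage_of_isOpen f Metric.isOpen_ball

end CoreConvexTopology

/-- `(X, τ_c)` has the Heine–Borel property: every `τ_c`-closed, von Neumann
bounded subset is `τ_c`-compact; moreover every `τ_c`-compact set lies in a
finite-dimensional linear subspace of `X`. -/
theorem stmt16 (X : Type*) [AddCommGroup X] [Module ℝ X] :
    letI : TopologicalSpace X := tauc X
    (∀ S : Set X, IsClosed S → Bornology.IsVonNBounded ℝ S → IsCompact S) ∧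
    (∀ S : Set X, IsCompact S →
      ∃ Y : Submodule ℝ X, FiniteDimensional ℝ Y ∧ S ⊆ (Y : Set X)) := by
  let : TopologicalSpace X := tauc X
  refine ⟨fun S hS hSb => ?_, fun S hS => ?_⟩
  · obtain ⟨Y, hY, hSY⟩ := exists_finiteDimensional_of_forall_isBounded_image fun f =>
      hSb.isBounded_image (continuous_tauc_linearMap f)
    let e := (Module.finBasis ℝ Y).equivFun
    let T := Y.subtype ∘ₗ e.symm.toLinearMap
    exact isCompact_of_subset_range (T := T) (Y.injective_subtype.comp e.symm.injective)
      (continuous_tauc_of_finiteDimensional T) continuous_tauc_linearMap hS hSb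
      fun x hx => ⟨e ⟨x, hSY hx⟩, by simp [T]⟩
  · exact exists_finiteDimensional_of_forall_isBounded_image fun f =>
      (hS.image (continuous_tauc_linearMap f)).isBounded
end

section
/- (Sandwich Theorem) Let X be a real vector space and let f, g : X → ℝ be functions such that f is convex, g is concave, and g(x) ≤ f(x) for every x ∈ X. Then there exist a linear functional l : X → ℝ and a scalar α ∈ ℝ such that g(x) ≤ l(x) + α ≤ f(x) for all x ∈ X. -/
open Pointwise

/-!
Put `A = {(x - y, r) | f x - g y ≤ r} ⊆ X × ℝ`. Convexity of `f` and concavity of `g` make `A`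
convex, `A` lies over all of `X`, and `g ≤ f` says that `A` meets the vertical line over `0` only
in `r ≥ 0`. The M. Riesz extension theorem, applied to the cone over `A` and the functional
`(0, r) ↦ r`, yields a linear `l` with `l (x - y) ≤ f x - g y` for all `x, y`, i.e.
`g y - l y ≤ f x - l x`; any `α` between the supremum of the left side and the infimum of the
right side works.
-/

open Set

theorem exists_forall_le_le_of_forall_le {ι α : Type*} [Nonempty ι] [ConditionallyCompleteLattice α]
    {u v : ι → α} (h : ∀ i j, u i ≤ v j) : ∃ a, ∀ i, u i ≤ a ∧ a ≤ v i :=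
  ⟨⨆ i, u i, fun i => ⟨le_ciSup ⟨v i, forall_mem_range.2 (h · i)⟩ i, ciSup_le (h · i)⟩⟩

section
universe u
variable {E : Type u} [AddCommGroup E] [Module ℝ E]

-- Unlike `Convex.toCone`, the scalar `r = 0` is allowed, which makes the cone pointed.
def Convex.toPointedCone {A : Set E} (hA : Convex ℝ A) (hne : A.Nonempty) : PointedCone ℝ E where
  carrier := {y | ∃ r : ℝ, 0 ≤ r ∧ y ∈ r • A}
  zero_mem' := ⟨0, le_rfl, by rw [zero_smul_set hne]; rfl⟩
  add_mem' := by
    rintro y₁ y₂ ⟨r₁, hr₁, hy₁⟩ ⟨r₂, hr₂, hy₂⟩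
    exact ⟨r₁ + r₂, add_nonneg hr₁ hr₂, hA.add_smul hr₁ hr₂ ▸ add_mem_add hy₁ hy₂⟩
  smul_mem' := by
    rintro c y ⟨r, hr, hy⟩
    exact ⟨c * r, mul_nonneg c.2 hr, by rw [mul_smul]; exact smul_mem_smul_set hy⟩

theorem Convex.exists_linearMap_le {A : Set (E × ℝ)} (hA : Convex ℝ A)
    (hdom : ∀ z, ∃ r, (z, r) ∈ A) (hzero : ∀ r, ((0 : E), r) ∈ A → 0 ≤ r) :
    ∃ l : E →ₗ[ℝ] ℝ, ∀ p ∈ A, l p.1 ≤ p.2 := by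
  obtain ⟨r₀, hr₀⟩ := hdom 0
  set C := hA.toPointedCone ⟨_, hr₀⟩
  set φ := (LinearMap.snd ℝ E ℝ).toPMap (Submodule.prod ⊥ ⊤)
  have nonneg : ∀ p : φ.domain, (p : E × ℝ) ∈ C → 0 ≤ φ p := by
    rintro ⟨p, hp₁, -⟩ ⟨r, hr, q, hq, rfl⟩
    change 0 ≤ r * q.2
    rcases hr.eq_or_lt with rfl | hr
    · simp
    · have hq₁ : q.1 = 0 := (smul_eq_zero.mp hp₁).resolve_left hr.ne'
      exact mul_nonneg hr.le (hzero q.2 (hq₁ ▸ hq))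
  have dense : ∀ p : E × ℝ, ∃ q : φ.domain, (q : E × ℝ) + p ∈ C := by
    rintro ⟨z, s⟩
    obtain ⟨r, hr⟩ := hdom z
    exact ⟨⟨(0, r - s), Submodule.zero_mem _, trivial⟩, 1, zero_le_one, by simpa using hr⟩
  obtain ⟨G, hGφ, hGC⟩ := riesz_extension C φ nonneg dense
  refine ⟨-G.comp (LinearMap.inl ℝ E ℝ), fun p hp => ?_⟩
  have hG_vert : G (0, p.2) = p.2 := hGφ ⟨(0, p.2), Submodule.zero_mem _, trivial⟩
  have hG_nonneg : 0 ≤ G p := hGC p ⟨1, zero_le_one, by simpa using hp⟩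
  have hG_split : G p = G (p.1, 0) + G (0, p.2) := by rw [← map_add]; simp
  simp only [LinearMap.neg_apply, LinearMap.comp_apply, LinearMap.inl_apply]
  linarith

variable {f g : E → ℝ}

theorem ConvexOn.convex_setOf_sub_le (hf : ConvexOn ℝ univ f) (hg : ConcaveOn ℝ univ g) :
    Convex ℝ {p : E × ℝ | ∃ x y, p.1 = x - y ∧ f x - g y ≤ p.2} := by
  rintro p ⟨x, y, hp, hxy⟩ q ⟨x', y', hq, hxy'⟩ a b ha hb hab
  refine ⟨a • x + b • x', a • y + b • y', ?_, ?_⟩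
  · simp only [Prod.fst_add, Prod.smul_fst, hp, hq]
    module
  · have hfx := hf.2 (mem_univ x) (mem_univ x') ha hb hab
    have hgy := hg.2 (mem_univ y) (mem_univ y') ha hb hab
    simp only [Prod.snd_add, Prod.smul_snd, smul_eq_mul] at hfx hgy ⊢
    nlinarith [mul_le_mul_of_nonneg_left hxy ha, mul_le_mul_of_nonneg_left hxy' hb]

theorem ConvexOn.exists_linearMap_le_sub (hf : ConvexOn ℝ univ f) (hg : ConcaveOn ℝ univ g)
    (hle : ∀ x, g x ≤ f x) : ∃ l : E →ₗ[ℝ] ℝ, ∀ x y, l (x - y) ≤ f x - g y := by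
  obtain ⟨l, hl⟩ := (hf.convex_setOf_sub_le hg).exists_linearMap_le
    (fun z => ⟨f z - g 0, z, 0, (sub_zero z).symm, le_rfl⟩)
    (fun r ⟨x, y, hxy, hr⟩ => by
      obtain rfl : x = y := sub_eq_zero.mp hxy.symm
      linarith [hle x])
  exact ⟨l, fun x y => hl (x - y, f x - g y) ⟨x, y, rfl, le_rfl⟩⟩

end

/-- Sandwich Theorem: If `f : X → ℝ` is convex, `g : X → ℝ` is concave and
`g ≤ f`, then there exist a linear functional `l` and `α ∈ ℝ` with
`g x ≤ l x + α ≤ f x` for all `x`. -/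
theorem stmt19 {X : Type*} [AddCommGroup X] [Module ℝ X] (f g : X → ℝ)
    (hf : ConvexOn ℝ Set.univ f) (hg : ConcaveOn ℝ Set.univ g)
    (hle : ∀ x : X, g x ≤ f x) :
    ∃ (l : X →ₗ[ℝ] ℝ) (α : ℝ), ∀ x : X, g x ≤ l x + α ∧ l x + α ≤ f x := by
  obtain ⟨l, hl⟩ := hf.exists_linearMap_le_sub hg hle
  have hsep : ∀ y x, g y - l y ≤ f x - l x := fun y x => by linarith [hl x y, map_sub l x y]
  obtain ⟨α, hα⟩ := exists_forall_le_le_of_forall_le hsep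
  exact ⟨l, α, fun x => ⟨by linarith [(hα x).1], by linarith [(hα x).2]⟩⟩
end
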